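/- arXiv:2003.01387 — 2 statements merged into one kernel-verified Lean document; each statement's English description precedes it below -/
import Mathlib

section
/- For X = (M, g/h) ∈ ℚ₊ × ℚ/ℤ with associated matrix α_X = [[M, g/h],[0,1]], and Y = (N, g'/h') with α_Y similarly, define δ(X,Y) = det(d·α_X·α_Y⁻¹) where d is the smallest positive rational with d·α_X·α_Y⁻¹ having integer entries. Then δ is symmetric: δ(X,Y) = δ(Y,X). -/
open Matrix

/-- A rational matrix has integral entries. -/
def MatIsIntegral (A : Matrix (Fin 2) (Fin 2) ℚ) : Prop :=
  ∀ i j, ∃ z : ℤ, A i j = (z : ℚ)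

/-!
For a `2 × 2` matrix the adjugate is integral exactly when the matrix is, and
`det A • A⁻¹ = adj A`. Hence `e • A` is integral iff `(e · det A) • A⁻¹` is, so the least
scalars satisfy `d_YX = d_XY · det A` for `A = α_X α_Y⁻¹`, and
`det (d_YX • A⁻¹) = d_XY² det A² / det A = det (d_XY • A)`.
-/

theorem MatIsIntegral.adjugate {A : Matrix (Fin 2) (Fin 2) ℚ} (hA : MatIsIntegral A) :
    MatIsIntegral A.adjugate := by
  have hneg : ∀ i j, ∃ z : ℤ, -A i j = (z : ℚ) := fun i j ↦
    let ⟨z, hz⟩ := hA i j; ⟨-z, by rw [hz, Int.cast_neg]⟩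
  rw [adjugate_fin_two]
  intro i j
  fin_cases i <;> fin_cases j
  exacts [hA 1 1, hneg 0 1, hneg 1 0, hA 0 0]

theorem Matrix.smul_inv_eq_adjugate_smul {K : Type*} [Field K] (A : Matrix (Fin 2) (Fin 2) K)
    (hA : A.det ≠ 0) (e : K) : (e * A.det) • A⁻¹ = (e • A).adjugate := by
  rw [adjugate_smul, inv_def, Ring.inverse_eq_inv', smul_smul, mul_assoc, mul_inv_cancel₀ hA,
    Fintype.card_fin, pow_one, mul_one]

theorem matIsIntegral_smul_inv_iff {A : Matrix (Fin 2) (Fin 2) ℚ} (hA : A.det ≠ 0) (e : ℚ) :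
    MatIsIntegral ((e * A.det) • A⁻¹) ↔ MatIsIntegral (e • A) := by
  refine ⟨fun h ↦ ?_, fun h ↦ A.smul_inv_eq_adjugate_smul hA e ▸ h.adjugate⟩
  have hA' : A⁻¹.det ≠ 0 := by simp [hA]
  have := (A⁻¹.smul_inv_eq_adjugate_smul hA' (e * A.det)) ▸ h.adjugate
  rwa [det_nonsing_inv, Ring.inverse_eq_inv', mul_assoc, mul_inv_cancel₀ hA, mul_one,
    nonsing_inv_nonsing_inv _ hA.isUnit] at this

def integralizingScalars (A : Matrix (Fin 2) (Fin 2) ℚ) : Set ℚ :=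
  {e | 0 < e ∧ MatIsIntegral (e • A)}

theorem isLeast_integralizingScalars_inv {A : Matrix (Fin 2) (Fin 2) ℚ} (hA : 0 < A.det) {d : ℚ}
    (hd : IsLeast (integralizingScalars A) d) :
    IsLeast (integralizingScalars A⁻¹) (d * A.det) := by
  obtain ⟨⟨hd_pos, hd_int⟩, hd_min⟩ := hd
  refine ⟨⟨by positivity, (matIsIntegral_smul_inv_iff hA.ne' d).2 hd_int⟩, ?_⟩
  rintro e ⟨he_pos, he_int⟩
  have he_div : MatIsIntegral ((e / A.det) • A) := by
    rwa [← matIsIntegral_smul_inv_iff hA.ne', div_mul_cancel₀ _ hA.ne']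
  calc d * A.det ≤ e / A.det * A.det := by gcongr; exact hd_min ⟨by positivity, he_div⟩
    _ = e := div_mul_cancel₀ _ hA.ne'

theorem hyperdistance_symmetric
    (M N : ℚ) (hM : 0 < M) (hN : 0 < N) (r r' : ℚ)
    (αX αY : Matrix (Fin 2) (Fin 2) ℚ)
    (hX : αX = !![M, r; 0, 1]) (hY : αY = !![N, r'; 0, 1])
    (dXY dYX : ℚ) (hdXY : 0 < dXY) (hdYX : 0 < dYX)
    (hIXY : MatIsIntegral (dXY • (αX * αY⁻¹)))
    (hminXY : ∀ e : ℚ, 0 < e → MatIsIntegral (e • (αX * αY⁻¹)) → dXY ≤ e)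
    (hIYX : MatIsIntegral (dYX • (αY * αX⁻¹)))
    (hminYX : ∀ e : ℚ, 0 < e → MatIsIntegral (e • (αY * αX⁻¹)) → dYX ≤ e) :
    (dXY • (αX * αY⁻¹)).det = (dYX • (αY * αX⁻¹)).det := by
  set A := αX * αY⁻¹
  have hA : 0 < A.det := by
    rw [det_mul, det_nonsing_inv, Ring.inverse_eq_inv', hX, hY, det_fin_two_of, det_fin_two_of]
    simp only [mul_one, mul_zero, sub_zero]
    positivity
  have hinv : αY * αX⁻¹ = A⁻¹ := by
    rw [Matrix.mul_inv_rev, nonsing_inv_nonsing_inv]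
    simp [hY, det_fin_two_of, hN.ne']
  rw [hinv] at hIYX hminYX ⊢
  have hXY : IsLeast (integralizingScalars A) dXY :=
    ⟨⟨hdXY, hIXY⟩, fun e he ↦ hminXY e he.1 he.2⟩
  have hYX : IsLeast (integralizingScalars A⁻¹) dYX :=
    ⟨⟨hdYX, hIYX⟩, fun e he ↦ hminYX e he.1 he.2⟩
  have hdYX_eq : dYX = dXY * A.det := hYX.unique (isLeast_integralizingScalars_inv hA hXY)
  rw [hdYX_eq, det_smul, det_smul, det_nonsing_inv, Ring.inverse_eq_inv', Fintype.card_fin]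
  field_simp
end

section
/- The index of the congruence subgroup Γ₀(n) in SL₂(ℤ) equals ψ(n) = n·∏_{p | n, p prime}(1 + 1/p) (Dedekind's psi function). -/
/-!
Reduction mod `n` lets `SL(2, ℤ)` act on the projective line `P¹(ℤ/n)`, the unimodular column
vectors `(c, d)` mod `n` up to units. The action is transitive, because a unimodular vector mod
`n` lifts to a coprime pair of integers and hence to the first column of a matrix in `SL(2, ℤ)`;
the stabiliser of `∞ = [1 : 0]` is `Γ₀(n)`. So the index is `|P¹(ℤ/n)|`.

Units act freely on unimodular vectors, so `|P¹(R)| · |Rˣ|` counts them. Both counts are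
multiplicative under the Chinese remainder theorem, and over the local ring `ℤ/p^k` a vector is
unimodular iff one of its entries is a unit, which gives `|P¹(ℤ/p^k)| = p^k + p^(k-1)`.
-/

open Matrix CongruenceSubgroup
open scoped MatrixGroups

lemma card_units_add_card_nonunits (M : Type*) [Monoid M] [Finite M] :
    Nat.card Mˣ + Nat.card (nonunits M) = Nat.card M := by
  classical
  rw [Nat.card_congr (Equiv.ofInjective _ Units.val_injective), ← Nat.card_sum]
  exact Nat.card_congr (Equiv.Set.sumCompl _)

lemma IsLocalRing.isCoprime_iff_isUnit_or_isUnit {R : Type*} [CommRing R] [IsLocalRing R]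
    {a b : R} : IsCoprime a b ↔ IsUnit a ∨ IsUnit b := by
  constructor
  · rintro ⟨x, y, h⟩
    exact (isUnit_or_isUnit_of_isUnit_add (h ▸ isUnit_one)).imp
      isUnit_of_mul_isUnit_right isUnit_of_mul_isUnit_right
  · rintro (⟨u, rfl⟩ | ⟨u, rfl⟩)
    · exact ⟨↑u⁻¹, 0, by simp⟩
    · exact ⟨0, ↑u⁻¹, by simp⟩

lemma ZMod.isLocalRing_prime_pow {p k : ℕ} (hp : p.Prime) (hk : 0 < k) :
    IsLocalRing (ZMod (p ^ k)) := by
  have : Fact (1 < p ^ k) := ⟨Nat.one_lt_pow hk.ne' hp.one_lt⟩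
  have mem_nonunits (m : ℕ) : (m : ZMod (p ^ k)) ∈ nonunits _ ↔ p ∣ m := by
    rw [mem_nonunits_iff, ZMod.isUnit_natCast_iff_not_dvd_pow hp hk, not_not]
  refine IsLocalRing.of_nonunits_add fun a b ha hb => ?_
  rw [← ZMod.natCast_zmod_val a, mem_nonunits] at ha
  rw [← ZMod.natCast_zmod_val b, mem_nonunits] at hb
  rw [← ZMod.natCast_zmod_val a, ← ZMod.natCast_zmod_val b, ← Nat.cast_add, mem_nonunits]
  exact dvd_add ha hb

lemma Int.exists_isCoprime_add_mul {a b n : ℤ} (ha : a ≠ 0)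
    (h : ∃ x y z : ℤ, x * a + y * b + z * n = 1) : ∃ t : ℤ, IsCoprime a (b + t * n) := by
  classical
  obtain ⟨x, y, z, hxyz⟩ := h
  -- every prime factor of `a` divides exactly one of `b` and `t * n`
  let t : ℕ := ∏ p ∈ a.natAbs.primeFactors with ¬((p : ℕ) : ℤ) ∣ b, p
  have dvd_t_iff {p : ℕ} (hp : p.Prime) (hpa : (p : ℤ) ∣ a) : (p : ℤ) ∣ t ↔ ¬(p : ℤ) ∣ b := by
    rw [Int.natCast_dvd_natCast, (Nat.prime_iff.mp hp).dvd_finsetProd_iff]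
    constructor
    · rintro ⟨q, hq, hpq⟩
      rw [Finset.mem_filter] at hq
      rw [(Nat.prime_dvd_prime_iff_eq hp (Nat.prime_of_mem_primeFactors hq.1)).mp hpq]
      exact hq.2
    · intro hpb
      exact ⟨p, Finset.mem_filter.mpr
        ⟨Nat.mem_primeFactors.mpr ⟨hp, Int.natCast_dvd.mp hpa, Int.natAbs_ne_zero.mpr ha⟩, hpb⟩,
        dvd_rfl⟩
  refine ⟨t, Int.isCoprime_iff_gcd_eq_one.mpr (Nat.coprime_of_dvd fun p hp hpa hpbt => ?_)⟩
  rw [← Int.natCast_dvd] at hpa hpbt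
  by_cases hpb : (p : ℤ) ∣ b
  · have hpn : (p : ℤ) ∣ n :=
      (Int.Prime.dvd_mul' hp ((dvd_add_right hpb).mp hpbt)).resolve_left
        ((dvd_t_iff hp hpa).not_left.mpr hpb)
    have h1 : (p : ℤ) ∣ 1 := hxyz ▸ ((hpa.mul_left x).add (hpb.mul_left y)).add (hpn.mul_left z)
    exact hp.one_lt.ne' (by exact_mod_cast Int.eq_one_of_dvd_one (by positivity) h1)
  · exact hpb ((dvd_add_left (((dvd_t_iff hp hpa).mpr hpb).mul_right n)).mp hpbt)

lemma ZMod.exists_isCoprime_intCast_eq {n : ℕ} [NeZero n] {c d : ZMod n} (h : IsCoprime c d) :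
    ∃ a b : ℤ, IsCoprime a b ∧ (a : ZMod n) = c ∧ (b : ZMod n) = d := by
  obtain ⟨u, v, huv⟩ := h
  set a : ℤ := c.val + n
  have ha : a ≠ 0 := by have := NeZero.pos n; positivity
  have hac : (a : ZMod n) = c := by simp [a]
  have hbezout : ∃ x y z : ℤ, x * a + y * d.val + z * n = 1 := by
    have : ((u.val * a + v.val * d.val : ℤ) : ZMod n) = ((1 : ℤ) : ZMod n) := by
      push_cast; simpa [hac] using huv
    obtain ⟨k, hk⟩ := (ZMod.intCast_eq_intCast_iff_dvd_sub _ _ _).mp this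
    exact ⟨u.val, v.val, k, by linarith⟩
  obtain ⟨t, ht⟩ := Int.exists_isCoprime_add_mul ha hbezout
  exact ⟨a, d.val + t * n, ht, hac, by simp⟩

def UnimodularVec (R : Type*) [CommRing R] : Type _ := {v : Fin 2 → R // IsCoprime (v 0) (v 1)}

namespace UnimodularVec

variable {R S T : Type*} [CommRing R] [CommRing S] [CommRing T]

@[ext] lemma ext {v w : UnimodularVec R} (h : v.1 = w.1) : v = w := Subtype.ext h

instance [Finite R] : Finite (UnimodularVec R) := Subtype.finite

instance : MulAction SL(2, R) (UnimodularVec R) where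
  smul g v := ⟨g.1 *ᵥ v.1, v.2.mulVecSL g⟩
  one_smul v := ext (one_mulVec v.1)
  mul_smul g h v := ext (mulVec_mulVec v.1 g.1 h.1).symm

instance : MulAction Rˣ (UnimodularVec R) where
  smul u v := ⟨(u : R) • v.1, (isCoprime_mul_unit_left u.isUnit _ _).mpr v.2⟩
  one_smul v := ext (one_smul R v.1)
  mul_smul u w v := ext (mul_smul (u : R) w v.1)

@[simp] lemma coe_SL_smul (g : SL(2, R)) (v : UnimodularVec R) : (g • v).1 = g.1 *ᵥ v.1 := rfl

@[simp] lemma coe_units_smul (u : Rˣ) (v : UnimodularVec R) : (u • v).1 = (u : R) • v.1 := rfl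

instance : SMulCommClass SL(2, R) Rˣ (UnimodularVec R) where
  smul_comm g u v := ext (mulVec_smul g.1 (u : R) v.1)

variable (R) in
def e₀ : UnimodularVec R := ⟨![1, 0], isCoprime_one_left⟩

@[simp] lemma coe_e₀ : (e₀ R).1 = ![1, 0] := rfl

lemma stabilizer_units_eq_bot (v : UnimodularVec R) : MulAction.stabilizer Rˣ v = ⊥ := by
  refine (Subgroup.eq_bot_iff_forall _).mpr fun u hu => Units.ext ?_
  obtain ⟨x, y, hxy⟩ := v.2
  have hv : (u : R) • v.1 = v.1 := congrArg Subtype.val (show u • v = v from hu)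
  have h0 : (u : R) * v.1 0 = v.1 0 := congrFun hv 0
  have h1 : (u : R) * v.1 1 = v.1 1 := congrFun hv 1
  calc (u : R) = x * ((u : R) * v.1 0) + y * ((u : R) * v.1 1) := by
        linear_combination -(u : R) * hxy
    _ = 1 := by rw [h0, h1, hxy]

def congr (e : R ≃+* S) : UnimodularVec R ≃ UnimodularVec S :=
  (Equiv.piCongrRight fun _ => e.toEquiv).subtypeEquiv fun v =>
    ⟨fun h => h.map e.toRingHom, fun h => by simpa using h.map e.symm.toRingHom⟩

def prodEquiv : UnimodularVec (S × T) ≃ UnimodularVec S × UnimodularVec T where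
  toFun v := (⟨fun i => (v.1 i).1, v.2.map (RingHom.fst S T)⟩,
    ⟨fun i => (v.1 i).2, v.2.map (RingHom.snd S T)⟩)
  invFun w := ⟨fun i => (w.1.1 i, w.2.1 i), by
    obtain ⟨⟨x₁, y₁, h₁⟩, ⟨x₂, y₂, h₂⟩⟩ := And.intro w.1.2 w.2.2
    exact ⟨(x₁, x₂), (y₁, y₂), Prod.ext h₁ h₂⟩⟩
  left_inv _ := rfl
  right_inv _ := rfl

lemma card_add_sq_card_nonunits [IsLocalRing R] [Finite R] :
    Nat.card (UnimodularVec R) + Nat.card (nonunits R) ^ 2 = Nat.card R ^ 2 := by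
  classical
  let P : (Fin 2 → R) → Prop := fun v => ∀ i, v i ∈ nonunits R
  have hU : UnimodularVec R ≃ {v // ¬P v} := Equiv.subtypeEquivRight fun v => by
    simp [P, Fin.forall_fin_two, IsLocalRing.isCoprime_iff_isUnit_or_isUnit, or_iff_not_imp_left]
  have hN : {v // P v} ≃ (Fin 2 → nonunits R) := Equiv.subtypePiEquivPi
  have card_fin_two_fun (α : Type _) [Finite α] : Nat.card (Fin 2 → α) = Nat.card α ^ 2 := by
    rw [Nat.card_fun, Nat.card_fin]
  rw [Nat.card_congr hU, ← card_fin_two_fun, ← Nat.card_congr hN, ← card_fin_two_fun, add_comm,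
    ← Nat.card_sum]
  exact Nat.card_congr (Equiv.sumCompl P)

end UnimodularVec

def ProjLine (R : Type*) [CommRing R] : Type _ := MulAction.orbitRel.Quotient Rˣ (UnimodularVec R)

namespace ProjLine

variable {R S T : Type*} [CommRing R] [CommRing S] [CommRing T]

def mk (v : UnimodularVec R) : ProjLine R := Quotient.mk _ v

variable (R) in
def infty : ProjLine R := mk (UnimodularVec.e₀ R)

lemma mk_eq_mk_iff {v w : UnimodularVec R} : mk v = mk w ↔ ∃ u : Rˣ, u • w = v :=
  Quotient.eq.trans MulAction.mem_orbit_iff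

instance : MulAction SL(2, R) (ProjLine R) where
  smul g := Quotient.map (g • ·) fun v w ⟨u, huv⟩ => ⟨u, by simp only [← huv, smul_comm]⟩
  one_smul x := Quotient.inductionOn x fun v => congrArg mk (one_smul _ v)
  mul_smul g h x := Quotient.inductionOn x fun v => congrArg mk (mul_smul g h v)

@[simp] lemma smul_mk (g : SL(2, R)) (v : UnimodularVec R) : g • mk v = mk (g • v) := rfl

lemma smul_infty_eq_infty_iff (g : SL(2, R)) : g • infty R = infty R ↔ g 1 0 = 0 := by
  have hcol : g.1 *ᵥ ![1, 0] = ![g 0 0, g 1 0] := by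
    ext i; fin_cases i <;> simp [mulVec, dotProduct, Fin.sum_univ_two]
  rw [infty, smul_mk, mk_eq_mk_iff]
  simp only [UnimodularVec.ext_iff, UnimodularVec.coe_SL_smul, UnimodularVec.coe_units_smul,
    UnimodularVec.coe_e₀, hcol, funext_iff, Fin.forall_fin_two]
  constructor
  · rintro ⟨u, -, hu⟩
    simpa using hu.symm
  · intro h10
    have hdet : g 0 0 * g 1 1 = 1 := by
      have := g.2
      rwa [det_fin_two, h10, mul_zero, sub_zero] at this
    exact ⟨Units.mkOfMulEqOne _ _ hdet, by simp, by simp [h10]⟩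

lemma card_unimodularVec : Nat.card (UnimodularVec R) = Nat.card (ProjLine R) * Nat.card Rˣ :=
  (Nat.card_congr (MulAction.selfEquivOrbitsQuotientProd
    UnimodularVec.stabilizer_units_eq_bot)).trans (Nat.card_prod _ _)

lemma card_of_ringEquiv_prod [Finite R] (e : R ≃+* S × T) :
    Nat.card (ProjLine R) = Nat.card (ProjLine S) * Nat.card (ProjLine T) := by
  have hU := Nat.card_congr ((UnimodularVec.congr e).trans UnimodularVec.prodEquiv)
  have hunits := Nat.card_congr ((Units.mapEquiv e.toMulEquiv).trans MulEquiv.prodUnits).toEquiv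
  rw [Nat.card_prod, card_unimodularVec, card_unimodularVec, card_unimodularVec] at hU
  rw [Nat.card_prod] at hunits
  refine Nat.eq_of_mul_eq_mul_right (Nat.card_pos (α := Rˣ)) ?_
  rw [hU, hunits]
  ring

lemma card_of_isLocalRing [IsLocalRing R] [Finite R] :
    Nat.card (ProjLine R) = Nat.card R + Nat.card (nonunits R) := by
  have hcount := UnimodularVec.card_add_sq_card_nonunits (R := R)
  rw [card_unimodularVec, ← card_units_add_card_nonunits R] at hcount
  refine Nat.eq_of_mul_eq_mul_right (Nat.card_pos (α := Rˣ)) ?_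
  rw [← card_units_add_card_nonunits R]
  exact Nat.add_right_cancel (hcount.trans (by ring))

lemma card_zmod_prime_pow {p k : ℕ} (hp : p.Prime) (hk : 0 < k) :
    Nat.card (ProjLine (ZMod (p ^ k))) = p ^ k + p ^ (k - 1) := by
  have := ZMod.isLocalRing_prime_pow hp hk
  have : NeZero (p ^ k) := ⟨pow_ne_zero k hp.ne_zero⟩
  have hunits := card_units_add_card_nonunits (ZMod (p ^ k))
  rw [Nat.card_zmod, Nat.card_eq_fintype_card (α := (ZMod _)ˣ), ZMod.card_units_eq_totient,
    Nat.totient_prime_pow hp hk] at hunits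
  have hpow : p ^ k = p ^ (k - 1) * (p - 1) + p ^ (k - 1) := by
    rw [← mul_add_one, Nat.sub_add_cancel hp.one_le, pow_sub_one_mul hk.ne']
  rw [card_of_isLocalRing, Nat.card_zmod]
  omega

lemma card_zmod {n : ℕ} (hn : n ≠ 0) :
    (Nat.card (ProjLine (ZMod n)) : ℚ) = n * ∏ p ∈ n.primeFactors, (1 + 1 / (p : ℚ)) := by
  induction n using Nat.recOnPosPrimePosCoprime with
  | prime_pow p k hp hk =>
    have hp0 : (p : ℚ) ≠ 0 := by exact_mod_cast hp.ne_zero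
    rw [card_zmod_prime_pow hp hk, Nat.primeFactors_prime_pow hk.ne' hp, Finset.prod_singleton]
    push_cast
    rw [← pow_sub_one_mul hk.ne']
    field_simp
  | zero => exact absurd rfl hn
  | one =>
    have : Nat.card (ProjLine (ZMod 1)) = 1 := Nat.card_eq_one_iff_unique.mpr
      ⟨⟨fun x y => Quotient.inductionOn₂ x y fun v w =>
        congrArg mk (UnimodularVec.ext (Subsingleton.elim _ _))⟩, ⟨infty _⟩⟩
    simp [this]
  | coprime a b ha hb hab iha ihb =>
    have : NeZero (a * b) := ⟨by positivity⟩
    rw [card_of_ringEquiv_prod (ZMod.chineseRemainder hab),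
      Nat.primeFactors_mul (by omega) (by omega), Finset.prod_union hab.disjoint_primeFactors,
      Nat.cast_mul, iha (by omega), ihb (by omega)]
    push_cast
    ring

end ProjLine

section Gamma0

variable (n : ℕ)

instance : MulAction SL(2, ℤ) (ProjLine (ZMod n)) :=
  MulAction.compHom _ (SpecialLinearGroup.map (Int.castRingHom (ZMod n)))

lemma ProjLine.stabilizer_infty_eq_Gamma0 :
    MulAction.stabilizer SL(2, ℤ) (ProjLine.infty (ZMod n)) = Gamma0 n := by
  ext g
  exact (ProjLine.smul_infty_eq_infty_iff _).trans Gamma0_mem.symm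

instance [NeZero n] : MulAction.IsPretransitive SL(2, ℤ) (ProjLine (ZMod n)) := by
  refine (MulAction.isPretransitive_iff_base (ProjLine.infty (ZMod n))).mpr fun x => ?_
  induction x using Quotient.inductionOn with | h v => ?_
  obtain ⟨a, b, hab, ha, hb⟩ := ZMod.exists_isCoprime_intCast_eq v.2
  obtain ⟨g, hg0, hg1⟩ := hab.exists_SL2_col 0
  refine ⟨g, congrArg ProjLine.mk (UnimodularVec.ext ?_)⟩
  ext i
  fin_cases i <;> simp [mulVec, dotProduct, Fin.sum_univ_two, hg0, hg1, ha, hb]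

lemma index_Gamma0_eq_card_projLine [NeZero n] :
    (Gamma0 n).index = Nat.card (ProjLine (ZMod n)) := by
  rw [← ProjLine.stabilizer_infty_eq_Gamma0, MulAction.index_stabilizer_of_transitive]

end Gamma0

theorem Gamma0_index (n : ℕ) (hn : 0 < n) :
    ((CongruenceSubgroup.Gamma0 n).index : ℚ) =
      (n : ℚ) * ∏ p ∈ n.primeFactors, (1 + 1 / (p : ℚ)) := by
  have : NeZero n := ⟨hn.ne'⟩
  rw [index_Gamma0_eq_card_projLine, ProjLine.card_zmod hn.ne']
end
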